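/- arXiv:0903.3685 — 2 statements merged into one kernel-verified Lean document; each statement's English description precedes it below -/
import Mathlib

section
/- Let m, n ≥ 3 be integers. The vertex set of the toroidal triangular lattice Δ_{m,n} admits a partition into seven 1-perfect codes if and only if 7 divides m and 7 divides n; in that case the seven codes can be chosen to be translates of one another, and every 1-perfect code of Δ_{m,n} has cardinality m·n/7. -/
open SimpleGraph Set

def triDirs : Set (ℤ × ℤ) := {(1,0), (-1,0), (0,1), (0,-1), (1,-1), (-1,1)}

def triLattice : SimpleGraph (ℤ × ℤ) :=
  SimpleGraph.fromRel (fun u v => u - v ∈ triDirs)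

def torLattice (m n : ℕ) : SimpleGraph (ZMod m × ZMod n) :=
  SimpleGraph.fromRel (fun u v =>
    ∃ d ∈ triDirs, u - v = ((d.1 : ZMod m), (d.2 : ZMod n)))

def IsPDS {V : Type*} (G : SimpleGraph V) (S : Set V) : Prop :=
  ∀ v ∉ S, ∃! u, u ∈ S ∧ G.Adj v u

def IsSPDS {V : Type*} (G : SimpleGraph V) (S : Set V) : Prop :=
  ∀ v ∉ S, {u | u ∈ S ∧ G.Adj v u}.ncard = 2

def IsQPDS {V : Type*} (G : SimpleGraph V) (S : Set V) : Prop :=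
  ∀ v ∉ S, {u | u ∈ S ∧ G.Adj v u}.ncard = 1 ∨ {u | u ∈ S ∧ G.Adj v u}.ncard = 2

def IsK2QPDS {V : Type*} (G : SimpleGraph V) (S : Set V) : Prop :=
  IsQPDS G S ∧ ∀ v ∈ S, {u | u ∈ S ∧ G.Adj v u}.ncard = 1

def IsK3QPDS {V : Type*} (G : SimpleGraph V) (S : Set V) : Prop :=
  IsQPDS G S ∧ ∀ v ∈ S, ∃ a b, a ≠ b ∧ G.Adj a b ∧ {u | u ∈ S ∧ G.Adj v u} = {a, b}

def IsIndep {V : Type*} (G : SimpleGraph V) (S : Set V) : Prop :=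
  ∀ a ∈ S, ∀ b ∈ S, ¬ G.Adj a b

/-- A 1-perfect code: a perfect dominating set which is independent. -/
def IsPerfectCode {V : Type*} (G : SimpleGraph V) (S : Set V) : Prop :=
  IsPDS G S ∧ IsIndep G S

/-!
The closed neighbourhoods of a perfect code tile the graph, so `7 |S| = m n`.

Pulled back to `ℤ²`, a perfect code of the torus becomes a perfect code of the triangular
lattice. There, each vertex at distance two from a codeword `x` must be dominated by a codeword
at distance three, and these choices are forced to be coherent: `x` is surrounded either by the
hexagon `hexA` or by the hexagon `hexB`, and the same hexagon surrounds each of its points. So the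
code contains a coset of an index-7 lattice, which contains `7 ℤ²`. Combined with periodicity
modulo `(m, 0)` and `(0, n)`, this puts two adjacent vertices into the code unless `7 ∣ m` and
`7 ∣ n`. Conversely, the fibres of `(a, b) ↦ a + 3 b mod 7` are seven translated perfect codes.
-/

open Pointwise

open Fin.NatCast in
theorem Fin.forall_of_imp_add_one {n : ℕ} [NeZero n] {P : Fin n → Prop} (h0 : P 0)
    (hstep : ∀ k, P k → P (k + 1)) (k : Fin n) : P k := by
  have hnat (j : ℕ) : P (j : Fin n) := by
    induction j with
    | zero => simpa using h0
    | succ j ih => simpa using hstep _ ih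
  simpa using hnat k

theorem AddSubgroup.add_mem_of_mem_closure {G : Type*} [AddGroup G] {D T : Set G}
    (hD : ∀ d ∈ D, -d ∈ D) (hT : ∀ x ∈ T, ∀ d ∈ D, x + d ∈ T) {x ℓ : G}
    (hx : x ∈ T) (hℓ : ℓ ∈ AddSubgroup.closure D) : x + ℓ ∈ T := by
  induction hℓ using AddSubgroup.closure_induction'' generalizing x with
  | mem d hd => exact hT x hx d hd
  | neg_mem d hd => exact hT x hx _ (hD d hd)
  | zero => simpa using hx
  | add a b _ _ ha hb => simpa [add_assoc] using hb (ha hx)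

theorem ZMod.exists_seven_mul_eq_one {k : ℕ} (h : ¬ 7 ∣ k) :
    ∃ a : ℤ, 7 * (a : ZMod k) = 1 := by
  obtain ⟨a, b, hab⟩ :=
    Nat.isCoprime_iff_coprime.2 ((Nat.Prime.coprime_iff_not_dvd (by norm_num)).2 h)
  refine ⟨a, ?_⟩
  have := congrArg (Int.cast : ℤ → ZMod k) hab
  push_cast [ZMod.natCast_self] at this
  linear_combination this

section PerfectCode

variable {V : Type*} {G : SimpleGraph V} {S : Set V}

theorem IsPDS.nonempty [Nonempty V] (hS : IsPDS G S) : S.Nonempty := by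
  by_contra hempty
  obtain ⟨u, ⟨hu, -⟩, -⟩ := hS (Classical.arbitrary V) fun hv => hempty ⟨_, hv⟩
  exact hempty ⟨u, hu⟩

theorem IsPerfectCode.eq_of_eq_or_adj (hS : IsPerfectCode G S) {x y w : V} (hx : x ∈ S)
    (hy : y ∈ S) (hxw : w = x ∨ G.Adj x w) (hyw : w = y ∨ G.Adj y w) : x = y := by
  by_cases hw : w ∈ S
  · rcases hxw with rfl | hxw
    · exact hyw.elim id fun h => (hS.2 _ hy _ hw h).elim
    · exact (hS.2 _ hx _ hw hxw).elim
  · have hxw := hxw.resolve_left fun h => hw (h ▸ hx)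
    have hyw := hyw.resolve_left fun h => hw (h ▸ hy)
    exact (hS.1 w hw).unique ⟨hx, hxw.symm⟩ ⟨hy, hyw.symm⟩

theorem IsPerfectCode.ncard_mul_add_one [Fintype V] [DecidableRel G.Adj] {d : ℕ}
    (hG : G.IsRegularOfDegree d) (hS : IsPerfectCode G S) :
    S.ncard * (d + 1) = Fintype.card V := by
  classical
  have hcover : (Finset.univ : Finset V) =
      S.toFinset.biUnion fun s => insert s (G.neighborFinset s) := by
    refine (Finset.eq_univ_of_forall fun v => ?_).symm
    simp only [Finset.mem_biUnion, Set.mem_toFinset, Finset.mem_insert, mem_neighborFinset]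
    by_cases hv : v ∈ S
    · exact ⟨v, hv, Or.inl rfl⟩
    · obtain ⟨u, ⟨hu, hvu⟩, -⟩ := hS.1 v hv
      exact ⟨u, hu, Or.inr hvu.symm⟩
  have hdisj : (S.toFinset : Set V).PairwiseDisjoint fun s => insert s (G.neighborFinset s) := by
    intro s hs t ht hst
    refine Finset.disjoint_left.2 fun w hws hwt => hst ?_
    simp only [Finset.mem_insert, mem_neighborFinset] at hws hwt
    exact hS.eq_of_eq_or_adj (by simpa using hs) (by simpa using ht) hws hwt
  rw [← Finset.card_univ, hcover, Finset.card_biUnion hdisj, Set.ncard_eq_toFinset_card',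
    Finset.sum_const_nat fun s _ => ?_]
  rw [Finset.card_insert_of_notMem (G.notMem_neighborFinset_self s),
    card_neighborFinset_eq_degree, hG s]

end PerfectCode

section CayleyGraph

variable {A B : Type*} [AddCommGroup A] [AddCommGroup B] {G : SimpleGraph A} {D : Set A}

def IsCayleyGraph (G : SimpleGraph A) (D : Set A) : Prop :=
  ∀ u v, G.Adj u v ↔ v - u ∈ D

theorem IsCayleyGraph.isRegularOfDegree [Fintype A] [DecidableRel G.Adj]
    (hG : IsCayleyGraph G D) : G.IsRegularOfDegree D.ncard := by
  intro v
  have hnbhd : G.neighborSet v = (v + ·) '' D := by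
    ext w
    simp only [mem_neighborSet, hG v w, Set.mem_image]
    exact ⟨fun h => ⟨w - v, h, add_sub_cancel v w⟩,
      by rintro ⟨d, hd, rfl⟩; simpa using hd⟩
  rw [← card_neighborSet_eq_degree, ← Nat.card_eq_fintype_card, _root_.Nat.card_coe_set_eq,
    hnbhd, Set.ncard_image_of_injective _ (add_right_injective v)]

theorem IsCayleyGraph.isPerfectCode_preimage {H : SimpleGraph B} {f : A →+ B}
    (hG : IsCayleyGraph G D) (hH : IsCayleyGraph H (f '' D)) (hf : InjOn f D) {S : Set B}
    (hS : IsPerfectCode H S) : IsPerfectCode G (f ⁻¹' S) := by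
  have hadj {u v : A} (h : G.Adj u v) : H.Adj (f u) (f v) :=
    (hH _ _).2 ⟨v - u, (hG u v).1 h, map_sub f v u⟩
  refine ⟨fun v hv => ?_, fun a ha b hb hab => hS.2 _ ha _ hb (hadj hab)⟩
  obtain ⟨u, ⟨hu, hvu⟩, huniq⟩ := hS.1 (f v) hv
  obtain ⟨d, hd, hdu⟩ := (hH _ _).1 hvu
  have hfd : f (v + d) = u := by rw [map_add, hdu, add_sub_cancel]
  refine ⟨v + d, ⟨by rwa [mem_preimage, hfd], (hG _ _).2 (by simpa using hd)⟩, ?_⟩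
  rintro w ⟨hw, hvw⟩
  have hwd : w - v = d :=
    hf ((hG _ _).1 hvw) hd (by rw [map_sub, huniq _ ⟨hw, hadj hvw⟩, hdu])
  rw [← hwd, add_sub_cancel]

theorem IsCayleyGraph.isPerfectCode_preimage_singleton (hG : IsCayleyGraph G D) {ψ : A →+ B}
    (hψ : BijOn ψ D {0}ᶜ) (b : B) : IsPerfectCode G (ψ ⁻¹' {b}) := by
  refine ⟨fun v hv => ?_, fun x hx y hy hxy => ?_⟩
  · obtain ⟨d, hd, hψd⟩ := hψ.surjOn (sub_ne_zero.2 (Ne.symm hv) : b - ψ v ≠ 0)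
    refine ⟨v + d, ⟨by simp [hψd], (hG _ _).2 (by simpa using hd)⟩, ?_⟩
    rintro w ⟨hw, hvw⟩
    have hwd : w - v = d :=
      hψ.injOn ((hG _ _).1 hvw) hd
        (by rw [map_sub, hψd, mem_singleton_iff.1 (mem_preimage.1 hw)])
    rw [← hwd, add_sub_cancel]
  · refine hψ.mapsTo ((hG _ _).1 hxy) ?_
    rw [map_sub, mem_singleton_iff.1 (mem_preimage.1 hx),
      mem_singleton_iff.1 (mem_preimage.1 hy), sub_self]
    rfl

end CayleyGraph

section TriangularLattice

def nbhdOffsets : Finset (ℤ × ℤ) := {0, (1,0), (-1,0), (0,1), (0,-1), (1,-1), (-1,1)}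

def conflictOffsets : Finset (ℤ × ℤ) := (nbhdOffsets - nbhdOffsets).erase 0

theorem zero_notMem_triDirs : (0 : ℤ × ℤ) ∉ triDirs := by
  simp [triDirs, Prod.ext_iff]

theorem mem_nbhdOffsets {d : ℤ × ℤ} : d ∈ nbhdOffsets ↔ d = 0 ∨ d ∈ triDirs := by
  simp [nbhdOffsets, triDirs]

theorem coe_nbhdOffsets_erase_zero :
    ((nbhdOffsets.erase 0 : Finset (ℤ × ℤ)) : Set (ℤ × ℤ)) = triDirs := by
  ext d
  rw [Finset.mem_coe, Finset.mem_erase, mem_nbhdOffsets]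
  exact ⟨fun ⟨h0, h⟩ => h.resolve_left h0,
    fun h => ⟨ne_of_mem_of_not_mem h zero_notMem_triDirs, Or.inr h⟩⟩

theorem neg_mem_triDirs {d : ℤ × ℤ} (hd : d ∈ triDirs) : -d ∈ triDirs := by
  rw [← coe_nbhdOffsets_erase_zero] at hd ⊢
  revert d
  decide

theorem triLattice_isCayleyGraph : IsCayleyGraph triLattice triDirs := by
  intro u v
  rw [triLattice, fromRel_adj]
  refine ⟨fun ⟨_, h⟩ => h.elim (fun h => by simpa using neg_mem_triDirs h) id,
    fun h => ⟨?_, Or.inr h⟩⟩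
  rintro rfl
  exact zero_notMem_triDirs (by simpa using h)

theorem eq_or_triLattice_adj_iff {x w : ℤ × ℤ} :
    w = x ∨ triLattice.Adj x w ↔ w - x ∈ nbhdOffsets := by
  rw [mem_nbhdOffsets, sub_eq_zero, triLattice_isCayleyGraph]

variable {S : Set (ℤ × ℤ)} {x : ℤ × ℤ}

theorem IsPDS.exists_sub_mem_nbhdOffsets (hS : IsPDS triLattice S) (v : ℤ × ℤ) :
    ∃ u ∈ S, u - v ∈ nbhdOffsets := by
  by_cases hv : v ∈ S
  · exact ⟨v, hv, by simp [mem_nbhdOffsets]⟩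
  · obtain ⟨u, ⟨hu, hvu⟩, -⟩ := hS v hv
    exact ⟨u, hu, eq_or_triLattice_adj_iff.1 (Or.inr hvu)⟩

theorem IsPerfectCode.sub_notMem_conflictOffsets (hS : IsPerfectCode triLattice S) {y : ℤ × ℤ}
    (hx : x ∈ S) (hy : y ∈ S) : y - x ∉ conflictOffsets := by
  rw [conflictOffsets, Finset.mem_erase, sub_ne_zero, Finset.mem_sub]
  rintro ⟨hne, d, hd, d', hd', hdd'⟩
  obtain rfl : y = x + (d - d') := by rw [hdd']; abel
  refine hne (hS.eq_of_eq_or_adj hx hy (w := x + d) ?_ ?_).symm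
  · exact eq_or_triLattice_adj_iff.2 (by simpa using hd)
  · exact eq_or_triLattice_adj_iff.2 (by simpa using hd')

/-! The points `hexA k` (resp. `hexB k`) form the hexagon of nearest points of the index-7
lattice `{(a, b) | 7 ∣ a + 3 b}` (resp. `{(a, b) | 7 ∣ a - 2 b}`). The point `hexMid k` lies at
distance two from the origin, and `hexA k`, `hexB k` are its only neighbours at distance three. -/

def hexA : Fin 6 → ℤ × ℤ := ![(3,-1), (1,2), (-2,3), (-3,1), (-1,-2), (2,-3)]

def hexB : Fin 6 → ℤ × ℤ := ![(3,-2), (2,1), (-1,3), (-3,2), (-2,-1), (1,-3)]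

def hexMid : Fin 6 → ℤ × ℤ := ![(2,-1), (1,1), (-1,2), (-2,1), (-1,-1), (1,-2)]

theorem hexMid_add_mem (k : Fin 6) : ∀ d ∈ nbhdOffsets,
    hexMid k + d ∈ conflictOffsets ∨ hexMid k + d = hexA k ∨ hexMid k + d = hexB k := by
  revert k
  decide

theorem hexB_sub_hexA_mem (k : Fin 6) : hexB k - hexA k ∈ conflictOffsets := by
  revert k
  decide

theorem hexA_sub_hexB_mem (k : Fin 6) : hexA k - hexB k ∈ conflictOffsets := by
  revert k
  decide

theorem hexB_add_one_sub_hexA_mem (k : Fin 6) : hexB (k + 1) - hexA k ∈ conflictOffsets := by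
  revert k
  decide

theorem hexA_add_three (k : Fin 6) : hexA (k + 3) = -hexA k := by
  revert k
  decide

theorem hexB_add_three (k : Fin 6) : hexB (k + 3) = -hexB k := by
  revert k
  decide

theorem IsPerfectCode.hexagon (hS : IsPerfectCode triLattice S) (hx : x ∈ S) :
    (∀ k, x + hexA k ∈ S) ∨ (∀ k, x + hexB k ∈ S) := by
  have hconflict {u v : ℤ × ℤ} (hu : x + u ∈ S) (hv : x + v ∈ S) :
      v - u ∉ conflictOffsets := by
    simpa using hS.sub_notMem_conflictOffsets hu hv
  have hAB (k : Fin 6) : x + hexA k ∈ S ∨ x + hexB k ∈ S := by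
    obtain ⟨u, hu, hd⟩ := hS.1.exists_sub_mem_nbhdOffsets (x + hexMid k)
    have hux : hexMid k + (u - (x + hexMid k)) = u - x := by abel
    rcases hexMid_add_mem k _ hd with h | h | h
    · exact absurd (hux ▸ h) (hS.sub_notMem_conflictOffsets hx hu)
    · exact Or.inl (by rwa [← h, hux, add_sub_cancel])
    · exact Or.inr (by rwa [← h, hux, add_sub_cancel])
  rcases hAB 0 with h0 | h0
  · refine Or.inl (Fin.forall_of_imp_add_one h0 fun k hk => (hAB (k + 1)).resolve_right ?_)
    exact fun hk' => hconflict hk hk' (hexB_add_one_sub_hexA_mem k)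
  · have hneg : ∀ k, x + hexB (-k) ∈ S := by
      refine Fin.forall_of_imp_add_one (by simpa using h0) fun k hk => (hAB _).resolve_left ?_
      exact fun hk' => hconflict hk' (by rwa [neg_add, neg_add_cancel_right])
        (hexB_add_one_sub_hexA_mem _)
    exact Or.inr fun k => by simpa using hneg (-k)

theorem seven_smul_mem {L : AddSubgroup (ℤ × ℤ)} (h₁ : ((7, 0) : ℤ × ℤ) ∈ L)
    (h₂ : ((0, 7) : ℤ × ℤ) ∈ L) (ℓ : ℤ × ℤ) : 7 • ℓ ∈ L := by
  have : 7 • ℓ = ℓ.1 • ((7, 0) : ℤ × ℤ) + ℓ.2 • ((0, 7) : ℤ × ℤ) := by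
    ext <;> simp [mul_comm]
  rw [this]
  exact add_mem (zsmul_mem h₁ _) (zsmul_mem h₂ _)

theorem seven_smul_mem_closure_hexA (ℓ : ℤ × ℤ) :
    7 • ℓ ∈ AddSubgroup.closure (Set.range hexA) := by
  have hA (k : Fin 6) : hexA k ∈ AddSubgroup.closure (Set.range hexA) :=
    AddSubgroup.subset_closure ⟨k, rfl⟩
  refine seven_smul_mem ?_ ?_ ℓ
  · have : ((7, 0) : ℤ × ℤ) = hexA 0 + hexA 0 + hexA 1 := by decide
    rw [this]
    exact add_mem (add_mem (hA 0) (hA 0)) (hA 1)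
  · have : ((0, 7) : ℤ × ℤ) = hexA 1 + hexA 1 + hexA 1 + hexA 3 := by decide
    rw [this]
    exact add_mem (add_mem (add_mem (hA 1) (hA 1)) (hA 1)) (hA 3)

theorem seven_smul_mem_closure_hexB (ℓ : ℤ × ℤ) :
    7 • ℓ ∈ AddSubgroup.closure (Set.range hexB) := by
  have hB (k : Fin 6) : hexB k ∈ AddSubgroup.closure (Set.range hexB) :=
    AddSubgroup.subset_closure ⟨k, rfl⟩
  refine seven_smul_mem ?_ ?_ ℓ
  · have : ((7, 0) : ℤ × ℤ) = hexB 0 + hexB 1 + hexB 1 := by decide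
    rw [this]
    exact add_mem (add_mem (hB 0) (hB 1)) (hB 1)
  · have : ((0, 7) : ℤ × ℤ) = hexB 1 + hexB 1 + hexB 1 + hexB 3 + hexB 3 := by decide
    rw [this]
    exact add_mem (add_mem (add_mem (add_mem (hB 1) (hB 1)) (hB 1)) (hB 3)) (hB 3)

/-- A codeword of the `H`-hexagon around `x` cannot be surrounded by an `H'`-hexagon, one point
of which would conflict with `x`. -/
theorem IsPerfectCode.add_mem_of_hexagon (hS : IsPerfectCode triLattice S)
    {H H' : Fin 6 → ℤ × ℤ} (hneg : ∀ k, H (k + 3) = -H k)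
    (hconflict : ∀ k, H' k - H k ∈ conflictOffsets)
    (htype : ∀ y ∈ S, (∀ k, y + H k ∈ S) ∨ (∀ k, y + H' k ∈ S))
    (hx : x ∈ S) (hxH : ∀ k, x + H k ∈ S) {ℓ : ℤ × ℤ}
    (hℓ : ℓ ∈ AddSubgroup.closure (Set.range H)) : x + ℓ ∈ S := by
  let T := {y | y ∈ S ∧ ∀ k, y + H k ∈ S}
  have hT : ∀ y ∈ T, ∀ d ∈ Set.range H, y + d ∈ T := by
    rintro y ⟨hy, hyH⟩ _ ⟨j, rfl⟩
    refine ⟨hyH j, (htype _ (hyH j)).resolve_right fun hH' => ?_⟩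
    have hback : y + H j + H (j + 3) = y := by rw [hneg]; abel
    exact hS.sub_notMem_conflictOffsets (hback ▸ hy) (hH' (j + 3))
      (by simpa using hconflict (j + 3))
  refine (AddSubgroup.add_mem_of_mem_closure ?_ hT ⟨hx, hxH⟩ hℓ).1
  rintro _ ⟨k, rfl⟩
  exact ⟨k + 3, hneg k⟩

theorem IsPerfectCode.add_seven_smul_mem (hS : IsPerfectCode triLattice S) (hx : x ∈ S)
    (ℓ : ℤ × ℤ) : x + 7 • ℓ ∈ S := by
  rcases hS.hexagon hx with hA | hB
  · exact hS.add_mem_of_hexagon hexA_add_three hexB_sub_hexA_mem (fun y hy => hS.hexagon hy)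
      hx hA (seven_smul_mem_closure_hexA ℓ)
  · exact hS.add_mem_of_hexagon hexB_add_three hexA_sub_hexB_mem
      (fun y hy => (hS.hexagon hy).symm) hx hB (seven_smul_mem_closure_hexB ℓ)

end TriangularLattice

section Torus

variable {m n : ℕ}

def torusProj (m n : ℕ) : ℤ × ℤ →+ ZMod m × ZMod n :=
  (Int.castAddHom (ZMod m)).prodMap (Int.castAddHom (ZMod n))

theorem torusProj_apply (d : ℤ × ℤ) : torusProj m n d = ((d.1 : ZMod m), (d.2 : ZMod n)) := rfl

theorem torusProj_eq_zero_iff (hm : 3 ≤ m) (hn : 3 ≤ n) {d : ℤ × ℤ}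
    (hd : d ∈ nbhdOffsets - nbhdOffsets) : torusProj m n d = 0 ↔ d = 0 := by
  have hsmall : ∀ d ∈ nbhdOffsets - nbhdOffsets, d.1.natAbs ≤ 2 ∧ d.2.natAbs ≤ 2 := by
    decide
  have hcast {k : ℕ} (hk : 3 ≤ k) {a : ℤ} (ha : a.natAbs ≤ 2) :
      (a : ZMod k) = 0 ↔ a = 0 := by
    rw [ZMod.intCast_zmod_eq_zero_iff_dvd]
    exact ⟨fun h => Int.eq_zero_of_dvd_of_natAbs_lt_natAbs h (by simp; omega),
      by rintro rfl; simp⟩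
  rw [torusProj_apply, Prod.ext_iff, Prod.ext_iff, Prod.fst_zero, Prod.snd_zero,
    hcast hm (hsmall d hd).1, hcast hn (hsmall d hd).2]
  rfl

theorem injOn_torusProj (hm : 3 ≤ m) (hn : 3 ≤ n) : InjOn (torusProj m n) triDirs := by
  intro d hd d' hd' h
  have hmem : d - d' ∈ nbhdOffsets - nbhdOffsets :=
    Finset.sub_mem_sub (mem_nbhdOffsets.2 (Or.inr hd)) (mem_nbhdOffsets.2 (Or.inr hd'))
  rw [← sub_eq_zero, ← torusProj_eq_zero_iff hm hn hmem, map_sub, h, sub_self]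

theorem torLattice_isCayleyGraph (hm : 3 ≤ m) (hn : 3 ≤ n) :
    IsCayleyGraph (torLattice m n) (torusProj m n '' triDirs) := by
  intro u v
  simp only [torLattice, fromRel_adj, ← torusProj_apply, Set.mem_image]
  constructor
  · rintro ⟨-, ⟨d, hd, h⟩ | ⟨d, hd, h⟩⟩
    · exact ⟨-d, neg_mem_triDirs hd, by rw [map_neg, ← h, neg_sub]⟩
    · exact ⟨d, hd, h.symm⟩
  · rintro ⟨d, hd, h⟩
    refine ⟨fun huv => ?_, Or.inr ⟨d, hd, h.symm⟩⟩
    have hmem : d ∈ nbhdOffsets - nbhdOffsets := by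
      simpa using Finset.sub_mem_sub (mem_nbhdOffsets.2 (Or.inr hd))
        (mem_nbhdOffsets.2 (Or.inl rfl))
    rw [huv, sub_self, torusProj_eq_zero_iff hm hn hmem] at h
    exact zero_notMem_triDirs (h ▸ hd)

/-- If `7 ∤ m`, some multiple of `(7, 0)` is congruent to `(1, 0)` modulo `(m, 0)`. -/
theorem IsPerfectCode.seven_dvd (hm : 3 ≤ m) (hn : 3 ≤ n) {S : Set (ZMod m × ZMod n)}
    (hS : IsPerfectCode (torLattice m n) S) : 7 ∣ m ∧ 7 ∣ n := by
  have hS' := triLattice_isCayleyGraph.isPerfectCode_preimage (torLattice_isCayleyGraph hm hn)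
    (injOn_torusProj hm hn) hS
  obtain ⟨x, hx⟩ := hS'.1.nonempty
  have hfar (w : ℤ × ℤ) {d : ℤ × ℤ} (hd : d ∈ triDirs) :
      torusProj m n (7 • w) ≠ torusProj m n d := by
    intro h
    have hxd := hS'.add_seven_smul_mem hx w
    rw [mem_preimage, map_add, h, ← map_add, ← mem_preimage] at hxd
    exact hS'.2 _ hx _ hxd ((triLattice_isCayleyGraph _ _).2 (by simpa using hd))
  constructor
  · by_contra h7
    obtain ⟨a, ha⟩ := ZMod.exists_seven_mul_eq_one h7
    exact hfar (a, 0) (d := (1, 0)) (by simp [triDirs]) (by simp [torusProj_apply, ha])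
  · by_contra h7
    obtain ⟨a, ha⟩ := ZMod.exists_seven_mul_eq_one h7
    exact hfar (0, a) (d := (0, 1)) (by simp [triDirs]) (by simp [torusProj_apply, ha])

theorem ncard_triDirs : triDirs.ncard = 6 := by
  rw [← coe_nbhdOffsets_erase_zero, Set.ncard_coe_finset]
  rfl

theorem IsPerfectCode.ncard_mul_seven (hm : 3 ≤ m) (hn : 3 ≤ n) {S : Set (ZMod m × ZMod n)}
    (hS : IsPerfectCode (torLattice m n) S) : S.ncard * 7 = m * n := by
  classical
  have : NeZero m := ⟨by omega⟩
  have : NeZero n := ⟨by omega⟩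
  have hreg := (torLattice_isCayleyGraph hm hn).isRegularOfDegree
  rw [(injOn_torusProj hm hn).ncard_image, ncard_triDirs] at hreg
  simpa using hS.ncard_mul_add_one hreg

end Torus

section Colouring

variable {m n : ℕ}

/-- `(a, b) ↦ a + 3 b mod 7`: the seven closed-neighbourhood offsets take the seven values
`0, ±1, ±2, ±3`. -/
def torusColouring (hm : 7 ∣ m) (hn : 7 ∣ n) : ZMod m × ZMod n →+ ZMod 7 :=
  (ZMod.castHom hm (ZMod 7)).toAddMonoidHom.coprod
    (3 • (ZMod.castHom hn (ZMod 7)).toAddMonoidHom)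

theorem torusColouring_torusProj (hm : 7 ∣ m) (hn : 7 ∣ n) (d : ℤ × ℤ) :
    torusColouring hm hn (torusProj m n d) = ((d.1 + 3 * d.2 : ℤ) : ZMod 7) := by
  simp [torusColouring, torusProj_apply]

theorem bijOn_torusColouring (hm : 7 ∣ m) (hn : 7 ∣ n) :
    BijOn (torusColouring hm hn) (torusProj m n '' triDirs) {0}ᶜ := by
  have hcomp : torusColouring hm hn ∘ torusProj m n = fun d => ((d.1 + 3 * d.2 : ℤ) : ZMod 7) :=
    funext (torusColouring_torusProj hm hn)
  rw [← coe_nbhdOffsets_erase_zero]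
  refine ⟨mapsTo_image_iff.2 ?_, InjOn.image_of_comp ?_,
    SurjOn.of_comp ?_ (mapsTo_image _ _)⟩ <;>
    rw [hcomp]
  · intro d hd
    revert d
    decide
  · intro d hd d' hd'
    revert d d'
    decide
  · intro z hz
    rw [mem_compl_singleton_iff] at hz
    simp only [mem_image, Finset.mem_coe]
    revert z
    decide

theorem exists_translate_partition (hm : 3 ≤ m) (hn : 3 ≤ n) (hm7 : 7 ∣ m) (hn7 : 7 ∣ n) :
    ∃ S : Fin 7 → Set (ZMod m × ZMod n),
      (Pairwise fun i j => Disjoint (S i) (S j)) ∧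
      (⋃ i, S i) = Set.univ ∧
      (∀ i, IsPerfectCode (torLattice m n) (S i)) ∧
      (∀ i j, ∃ t : ZMod m × ZMod n, S j = (fun p => p + t) '' S i) := by
  let ψ := torusColouring hm7 hn7
  have hψ := bijOn_torusColouring hm7 hn7
  have hsurj : Function.Surjective ψ := fun b => by
    by_cases hb : b = 0
    · exact ⟨0, by rw [hb, map_zero]⟩
    · obtain ⟨x, -, hx⟩ := hψ.surjOn hb
      exact ⟨x, hx⟩
  let e := ZMod.finEquiv 7
  refine ⟨fun i => ψ ⁻¹' {e i}, fun i j hij => ?_, ?_,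
    fun i => (torLattice_isCayleyGraph hm hn).isPerfectCode_preimage_singleton hψ _,
    fun i j => ?_⟩
  · exact Disjoint.preimage _ (Set.disjoint_singleton.2 (e.injective.ne hij))
  · refine Set.eq_univ_of_forall fun x => Set.mem_iUnion.2 ⟨e.symm (ψ x), by simp⟩
  · obtain ⟨t, ht⟩ := hsurj (e j - e i)
    refine ⟨t, ?_⟩
    ext x
    simp only [Set.image_add_right, mem_preimage, mem_singleton_iff, map_add, map_neg, ht]
    constructor <;> intro h <;> linear_combination h

end Colouring

/-- The toroidal triangular lattice `Δ_{m,n}` admits a partition of its vertex set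
into seven 1-perfect codes iff `7 ∣ m` and `7 ∣ n`; in that case the codes can be
chosen to be translates of one another, and every 1-perfect code has `m·n/7`
elements. -/
theorem toroidal_perfect_code_partition (m n : ℕ) (hm : 3 ≤ m) (hn : 3 ≤ n) :
    ((∃ S : Fin 7 → Set (ZMod m × ZMod n),
        (Pairwise fun i j => Disjoint (S i) (S j)) ∧
        (⋃ i, S i) = Set.univ ∧
        ∀ i, IsPerfectCode (torLattice m n) (S i)) ↔ (7 ∣ m ∧ 7 ∣ n)) ∧
    (7 ∣ m → 7 ∣ n →
      (∃ S : Fin 7 → Set (ZMod m × ZMod n),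
        (Pairwise fun i j => Disjoint (S i) (S j)) ∧
        (⋃ i, S i) = Set.univ ∧
        (∀ i, IsPerfectCode (torLattice m n) (S i)) ∧
        (∀ i j, ∃ t : ZMod m × ZMod n, S j = (fun p => p + t) '' S i)) ∧
      (∀ S : Set (ZMod m × ZMod n), IsPerfectCode (torLattice m n) S →
        S.ncard = m * n / 7)) := by
  refine ⟨⟨fun ⟨S, _, _, hS⟩ => (hS 0).seven_dvd hm hn, fun ⟨hm7, hn7⟩ => ?_⟩,
    fun hm7 hn7 => ⟨exists_translate_partition hm hn hm7 hn7, fun S hS => ?_⟩⟩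
  · obtain ⟨S, hdisj, hcover, hS, -⟩ := exists_translate_partition hm hn hm7 hn7
    exact ⟨S, hdisj, hcover, hS⟩
  · have := hS.ncard_mul_seven hm hn
    omega
end

section
/- The set S₂ = {(x,y) ∈ ℤ × ℤ : 3 divides y} is a proper semiperfect dominating set of the triangular lattice Δ; every vertex of S₂ is adjacent to exactly two vertices of S₂ (so S₂ has no isolated vertices in the induced subgraph); the subgraph of Δ induced on the complement of S₂ is 4-regular and disconnected; and any two vertices of S₂ lying in distinct connected components of the subgraph induced on S₂ are at graph distance at least 3 in Δ, with some such pair at distance exactly 3. -/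
open SimpleGraph Set

/-- The set of points whose second coordinate is divisible by 3. -/
def spdsTwo : Set (ℤ × ℤ) := {p | (3 : ℤ) ∣ p.2}

/-!
Every vertex of `Δ` has six neighbours, and a case split on `y mod 3` shows that exactly
two of them lie in `S₂`, so four lie outside. Along an edge `y` changes by at most one.
Hence the components of `Δ[S₂]` are the rows `y = 3k`, while `y / 3` is constant on the
components of `Δ[S₂ᶜ]`, which lie in the strips `3k < y < 3k + 3`. Two rows of `S₂` differ
in `y` by at least 3, which bounds their distance in `Δ` from below; the vertical path from
`(0, 0)` to `(0, 3)` attains it.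
-/

namespace SimpleGraph

variable {V : Type*} {G : SimpleGraph V}

theorem Reachable.eq_of_forall_adj {α : Type*} {f : V → α}
    (hf : ∀ u v, G.Adj u v → f u = f v) {u v : V} (h : G.Reachable u v) : f u = f v := by
  rw [reachable_iff_reflTransGen] at h
  induction h with
  | refl => rfl
  | tail _ hadj ih => exact ih.trans (hf _ _ hadj)

theorem reachable_of_forall_adj_succ {f : ℤ → V} (hf : ∀ n, G.Adj (f n) (f (n + 1)))
    (m n : ℤ) : G.Reachable (f m) (f n) := by
  suffices h : ∀ n, G.Reachable (f 0) (f n) from (h m).symm.trans (h n)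
  intro n
  induction n with
  | zero => rfl
  | succ n ih => exact ih.trans (hf n).reachable
  | pred n ih => exact ih.trans (by simpa using (hf (-n - 1)).reachable.symm)

theorem Walk.natAbs_sub_le_length {f : V → ℤ}
    (hf : ∀ u v, G.Adj u v → (f v - f u).natAbs ≤ 1) {u v : V} (w : G.Walk u v) :
    (f v - f u).natAbs ≤ w.length := by
  induction w with
  | nil => simp
  | cons hadj _ ih =>
    have := hf _ _ hadj
    rw [Walk.length_cons]
    omega

theorem Reachable.natAbs_sub_le_dist {f : V → ℤ}
    (hf : ∀ u v, G.Adj u v → (f v - f u).natAbs ≤ 1) {u v : V} (h : G.Reachable u v) :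
    (f v - f u).natAbs ≤ G.dist u v := by
  obtain ⟨w, hw⟩ := h.exists_walk_length_eq_dist
  exact hw ▸ w.natAbs_sub_le_length hf

theorem ncard_neighborSet_induce (s : Set V) (v : s) :
    ((G.induce s).neighborSet v).ncard = (s ∩ G.neighborSet v).ncard := by
  rw [neighborSet_induce, ← Set.ncard_preimage_of_injective_subset_range Subtype.val_injective
    (s := s ∩ G.neighborSet v) (fun u hu => ⟨⟨u, hu.1⟩, rfl⟩)]
  congr 1
  ext u
  simp

end SimpleGraph

theorem triLattice_adj_iff {u v : ℤ × ℤ} : triLattice.Adj u v ↔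
    (v.2 = u.2 ∧ (v.1 = u.1 + 1 ∨ v.1 = u.1 - 1)) ∨
    (v.2 = u.2 + 1 ∧ (v.1 = u.1 ∨ v.1 = u.1 - 1)) ∨
    (v.2 = u.2 - 1 ∧ (v.1 = u.1 ∨ v.1 = u.1 + 1)) := by
  simp only [triLattice, triDirs, fromRel_adj, Set.mem_insert_iff, Set.mem_singleton_iff,
    Prod.ext_iff, Prod.fst_sub, Prod.snd_sub, ne_eq]
  omega

theorem triLattice_neighborSet (v : ℤ × ℤ) :
    triLattice.neighborSet v = (v + ·) '' triDirs := by
  ext u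
  simp only [mem_neighborSet, triLattice_adj_iff, triDirs, Set.image_insert_eq,
    Set.image_singleton, Set.mem_insert_iff, Set.mem_singleton_iff, Prod.ext_iff, Prod.fst_add,
    Prod.snd_add]
  omega

theorem ncard_triLattice_neighborSet (v : ℤ × ℤ) : (triLattice.neighborSet v).ncard = 6 := by
  rw [triLattice_neighborSet, Set.ncard_image_of_injective _ (add_right_injective v)]
  simp [triDirs]

theorem triLattice_connected : triLattice.Connected := by
  refine ⟨fun p q => ?_⟩
  have horizontal := reachable_of_forall_adj_succ (G := triLattice) (f := fun n => (n, p.2))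
    (fun n => triLattice_adj_iff.mpr (by simp)) p.1 q.1
  have vertical := reachable_of_forall_adj_succ (G := triLattice) (f := fun n => (q.1, n))
    (fun n => triLattice_adj_iff.mpr (by simp)) p.2 q.2
  exact horizontal.trans vertical

theorem ncard_spdsTwo_inter_neighborSet (v : ℤ × ℤ) :
    (spdsTwo ∩ triLattice.neighborSet v).ncard = 2 := by
  obtain ⟨a, b, hab, hpair⟩ : ∃ a b : ℤ × ℤ, a ≠ b ∧
      spdsTwo ∩ triLattice.neighborSet v = {a, b} := by
    simp only [Set.ext_iff, spdsTwo, Set.mem_inter_iff, Set.mem_ofPred_eq, mem_neighborSet,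
      triLattice_adj_iff, Set.mem_insert_iff, Set.mem_singleton_iff, ne_eq, Prod.ext_iff]
    rcases (by omega : v.2 % 3 = 0 ∨ v.2 % 3 = 1 ∨ v.2 % 3 = 2) with h | h | h
    · exact ⟨(v.1 - 1, v.2), (v.1 + 1, v.2), by omega, fun u => by omega⟩
    · exact ⟨(v.1, v.2 - 1), (v.1 + 1, v.2 - 1), by omega, fun u => by omega⟩
    · exact ⟨(v.1, v.2 + 1), (v.1 - 1, v.2 + 1), by omega, fun u => by omega⟩
  rw [hpair, Set.ncard_pair hab]

theorem ncard_compl_spdsTwo_inter_neighborSet (v : ℤ × ℤ) :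
    (spdsTwoᶜ ∩ triLattice.neighborSet v).ncard = 4 := by
  have h := Set.ncard_inter_add_ncard_sdiff_eq_ncard (triLattice.neighborSet v) spdsTwo
    (Set.finite_of_ncard_pos (by rw [ncard_triLattice_neighborSet]; norm_num))
  rw [Set.inter_comm, ncard_spdsTwo_inter_neighborSet, ncard_triLattice_neighborSet] at h
  rw [Set.inter_comm, ← Set.sdiff_eq]
  omega

theorem spdsTwo_ne_univ : spdsTwo ≠ Set.univ := fun h =>
  absurd (h ▸ Set.mem_univ ((0, 1) : ℤ × ℤ)) (by simp [spdsTwo])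

theorem ediv_three_eq_of_adj_induce_compl_spdsTwo {u v : ↥spdsTwoᶜ}
    (h : (triLattice.induce spdsTwoᶜ).Adj u v) : u.1.2 / 3 = v.1.2 / 3 := by
  have hu : ¬ (3 : ℤ) ∣ u.1.2 := u.2
  have hv : ¬ (3 : ℤ) ∣ v.1.2 := v.2
  have := triLattice_adj_iff.mp (show triLattice.Adj u.1 v.1 from h)
  omega

theorem triLattice_induce_spdsTwo_reachable_iff {a b : ↥spdsTwo} :
    (triLattice.induce spdsTwo).Reachable a b ↔ a.1.2 = b.1.2 := by
  constructor
  · refine Reachable.eq_of_forall_adj (f := fun v : ↥spdsTwo => v.1.2) fun u v h => ?_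
    have hu : (3 : ℤ) ∣ u.1.2 := u.2
    have hv : (3 : ℤ) ∣ v.1.2 := v.2
    have := triLattice_adj_iff.mp (show triLattice.Adj u.1 v.1 from h)
    omega
  · intro hrow
    have := reachable_of_forall_adj_succ (G := triLattice.induce spdsTwo)
      (f := fun n => ⟨(n, a.1.2), a.2⟩)
      (fun n => triLattice_adj_iff.mpr (by simp)) a.1.1 b.1.1
    convert this using 1
    ext <;> simp [hrow]

theorem natAbs_sub_snd_le_triLattice_dist (a b : ℤ × ℤ) :
    (b.2 - a.2).natAbs ≤ triLattice.dist a b :=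
  (triLattice_connected.preconnected a b).natAbs_sub_le_dist fun u v h => by
    have := triLattice_adj_iff.mp h
    omega

theorem three_le_triLattice_dist {a b : ℤ × ℤ} (ha : a ∈ spdsTwo) (hb : b ∈ spdsTwo)
    (hrow : a.2 ≠ b.2) : 3 ≤ triLattice.dist a b := by
  have := natAbs_sub_snd_le_triLattice_dist a b
  obtain ⟨k, hk⟩ := ha
  obtain ⟨l, hl⟩ := hb
  omega

theorem triLattice_dist_origin_eq_three : triLattice.dist (0, 0) (0, 3) = 3 := by
  refine le_antisymm ?_ (three_le_triLattice_dist ⟨0, rfl⟩ ⟨1, rfl⟩ (by simp))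
  have adj_up : ∀ n : ℤ, triLattice.Adj (0, n) (0, n + 1) := fun n =>
    triLattice_adj_iff.mpr (by simp)
  exact dist_le ((adj_up 0).toWalk.append ((adj_up 1).toWalk.append (adj_up 2).toWalk))

/-- `spdsTwo` is a proper SPDS of the triangular lattice; every vertex of it has
exactly two neighbours inside it; the subgraph induced on its complement is
4-regular and disconnected; and vertices of `spdsTwo` in distinct induced
components are at distance at least 3, with some pair at distance exactly 3. -/
theorem nonisolated_SPDS_properties :
    (IsSPDS triLattice spdsTwo ∧ spdsTwo ≠ Set.univ) ∧
    (∀ v ∈ spdsTwo, {u | u ∈ spdsTwo ∧ triLattice.Adj v u}.ncard = 2) ∧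
    (∀ v : ↥(spdsTwoᶜ), ((triLattice.induce spdsTwoᶜ).neighborSet v).ncard = 4) ∧
    ¬ (triLattice.induce spdsTwoᶜ).Connected ∧
    (∀ (a : ℤ × ℤ) (ha : a ∈ spdsTwo) (b : ℤ × ℤ) (hb : b ∈ spdsTwo),
      ¬ (triLattice.induce spdsTwo).Reachable ⟨a, ha⟩ ⟨b, hb⟩ →
        3 ≤ triLattice.dist a b) ∧
    (∃ (a : ℤ × ℤ) (ha : a ∈ spdsTwo) (b : ℤ × ℤ) (hb : b ∈ spdsTwo),
      ¬ (triLattice.induce spdsTwo).Reachable ⟨a, ha⟩ ⟨b, hb⟩ ∧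
        triLattice.dist a b = 3) := by
  refine ⟨⟨fun v _ => ncard_spdsTwo_inter_neighborSet v, spdsTwo_ne_univ⟩,
    fun v _ => ncard_spdsTwo_inter_neighborSet v,
    fun v => (ncard_neighborSet_induce _ v).trans (ncard_compl_spdsTwo_inter_neighborSet v.1),
    ?_, ?_, ?_⟩
  · intro hconn
    have hstrip := (hconn.preconnected ⟨(0, 1), by simp [spdsTwo]⟩
      ⟨(0, 4), by simp [spdsTwo]⟩).eq_of_forall_adj
        fun _ _ => ediv_three_eq_of_adj_induce_compl_spdsTwo
    norm_num at hstrip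
  · intro a ha b hb hnr
    exact three_le_triLattice_dist ha hb fun hrow =>
      hnr (triLattice_induce_spdsTwo_reachable_iff.mpr hrow)
  · refine ⟨(0, 0), ⟨0, rfl⟩, (0, 3), ⟨1, rfl⟩, ?_, triLattice_dist_origin_eq_three⟩
    simp [triLattice_induce_spdsTwo_reachable_iff]
end
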